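/- Let (Q_n)_{n≥1} be a nonincreasing sequence of nonnegative reals tending to 0, and let 0 < ε < 1. Suppose that for all n ≥ 1, Q_n ≤ max over pairs (k, ℓ) with k, ℓ ≥ n^ε and k + ℓ ≥ n of Q_k · Q_ℓ. Then there exists c > 0 and N such that Q_n ≤ exp(−c n) for all n ≥ N. -/
import Mathlib


/-- Let `(Q n)` be a nonincreasing sequence of nonnegative reals tending to `0`, and let
`0 < ε < 1`. If for all `n ≥ 1` there is a pair `(k, ℓ)` with `k, ℓ ≥ n^ε` and `k + ℓ ≥ n`
such that `Q n ≤ Q k * Q ℓ` (i.e. `Q n` is at most the max over such pairs), then there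
exist `c > 0` and `N` such that `Q n ≤ exp (−c n)` for all `n ≥ N`. -/
theorem stmt1 (Q : ℕ → ℝ) (hnonneg : ∀ n, 0 ≤ Q n)
    (hmono : ∀ m n : ℕ, m ≤ n → Q n ≤ Q m)
    (hlim : Filter.Tendsto Q Filter.atTop (nhds 0))
    (ε : ℝ) (hε0 : 0 < ε) (hε1 : ε < 1)
    (hrec : ∀ n : ℕ, 1 ≤ n → ∃ k ℓ : ℕ,
      (n : ℝ) ^ ε ≤ (k : ℝ) ∧ (n : ℝ) ^ ε ≤ (ℓ : ℝ) ∧ n ≤ k + ℓ ∧ Q n ≤ Q k * Q ℓ) :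
    ∃ c : ℝ, 0 < c ∧ ∃ N : ℕ, ∀ n : ℕ, N ≤ n → Q n ≤ Real.exp (-(c * n)) := by
  -- find N1 with Q n < 1/2 for n ≥ N1
  have hev : ∀ᶠ n in Filter.atTop, Q n < 1/2 :=
    hlim.eventually (gt_mem_nhds (by norm_num : (0:ℝ) < 1/2))
  obtain ⟨N1, hN1⟩ := Filter.eventually_atTop.mp hev
  set N : ℕ := max N1 1 with hNdef
  have hN1le : N1 ≤ N := le_max_left _ _
  have hNone : 1 ≤ N := le_max_right _ _
  have hQNhalf : Q N < 1/2 := hN1 N hN1le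
  by_cases hQN0 : Q N = 0
  · refine ⟨1, one_pos, N, fun n hn => ?_⟩
    have h := hmono N n hn
    rw [hQN0] at h
    exact h.trans (Real.exp_pos _).le
  · have hQNpos : 0 < Q N := lt_of_le_of_ne (hnonneg N) (Ne.symm hQN0)
    set N' : ℕ := max N ⌈(N:ℝ)^(1/ε)⌉₊ with hN'def
    have hNN' : N ≤ N' := le_max_left _ _
    have hN'pos : (0:ℝ) < N' := by
      have : 1 ≤ N' := hNone.trans hNN'
      exact_mod_cast this
    have hlogneg : Real.log (Q N) < 0 := Real.log_neg hQNpos (by linarith)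
    set c : ℝ := -Real.log (Q N) / N' with hcdef
    have hc : 0 < c := div_pos (by linarith) hN'pos
    -- key fact: n ≥ N' implies (n:ℝ)^ε ≥ N
    have hpow : ∀ n : ℕ, N' ≤ n → (N:ℝ) ≤ (n:ℝ)^ε := by
      intro n hn
      have hbase : (N:ℝ)^(1/ε) ≤ (n:ℝ) := by
        have h1 : (N:ℝ)^(1/ε) ≤ (⌈(N:ℝ)^(1/ε)⌉₊ : ℝ) := Nat.le_ceil _
        have h2 : (⌈(N:ℝ)^(1/ε)⌉₊ : ℕ) ≤ n := (le_max_right N _).trans hn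
        exact h1.trans (by exact_mod_cast h2)
      have := Real.rpow_le_rpow (Real.rpow_nonneg (Nat.cast_nonneg N) _) hbase hε0.le
      have heq : ((N:ℝ)^(1/ε))^ε = (N:ℝ) := by
        rw [← Real.rpow_mul (Nat.cast_nonneg N), one_div,
          inv_mul_cancel₀ (ne_of_gt hε0), Real.rpow_one]
      linarith
    refine ⟨c, hc, N, ?_⟩
    intro n
    induction n using Nat.strong_induction_on with
    | _ n ih =>
      intro hn
      by_cases hsmall : n ≤ N'
      · -- base case
        have h1 : Q n ≤ Q N := hmono N n hn
        have hcN' : c * N' = -Real.log (Q N) := div_mul_cancel₀ _ (ne_of_gt hN'pos)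
        have h2 : Q N = Real.exp (-(c * N')) := by
          rw [hcN', neg_neg, Real.exp_log hQNpos]
        have h3 : Real.exp (-(c * N')) ≤ Real.exp (-(c * n)) := by
          apply Real.exp_le_exp.mpr
          have : (n:ℝ) ≤ N' := by exact_mod_cast hsmall
          nlinarith
        linarith
      · push_neg at hsmall
        have hn1 : 1 ≤ n := hNone.trans hn
        obtain ⟨k, ℓ, hk, hℓ, hkl, hQ⟩ := hrec n hn1
        have hnpow : (N:ℝ) ≤ (n:ℝ)^ε := hpow n hsmall.le
        have hNk : N ≤ k := by exact_mod_cast hnpow.trans hk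
        have hNℓ : N ≤ ℓ := by exact_mod_cast hnpow.trans hℓ
        rcases le_or_gt n k with hkn | hkn
        · -- k ≥ n, then Q n ≤ 0
          have h1 : Q k ≤ Q n := hmono n k hkn
          have h2 : Q ℓ ≤ Q N := hmono N ℓ hNℓ
          have h3 : Q n ≤ 0 := by nlinarith [hnonneg ℓ, hnonneg n, hnonneg k]
          exact h3.trans (Real.exp_pos _).le
        rcases le_or_gt n ℓ with hln | hln
        · have h1 : Q ℓ ≤ Q n := hmono n ℓ hln
          have h2 : Q k ≤ Q N := hmono N k hNk
          have h3 : Q n ≤ 0 := by nlinarith [hnonneg ℓ, hnonneg n, hnonneg k]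
          exact h3.trans (Real.exp_pos _).le
        · -- both k, ℓ < n : use induction hypothesis
          have ihk := ih k hkn hNk
          have ihl := ih ℓ hln hNℓ
          have h4 : Q k * Q ℓ ≤ Real.exp (-(c * k)) * Real.exp (-(c * ℓ)) :=
            mul_le_mul ihk ihl (hnonneg ℓ) (Real.exp_pos _).le
          have h5 : Real.exp (-(c * k)) * Real.exp (-(c * ℓ))
              = Real.exp (-(c * ((k:ℝ) + ℓ))) := by
            rw [← Real.exp_add]; ring_nf
          have h6 : Real.exp (-(c * ((k:ℝ) + ℓ))) ≤ Real.exp (-(c * n)) := by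
            apply Real.exp_le_exp.mpr
            have : (n:ℝ) ≤ (k:ℝ) + ℓ := by exact_mod_cast hkl
            nlinarith
          calc Q n ≤ Q k * Q ℓ := hQ
            _ ≤ Real.exp (-(c * k)) * Real.exp (-(c * ℓ)) := h4
            _ = Real.exp (-(c * ((k:ℝ) + ℓ))) := h5
            _ ≤ Real.exp (-(c * n)) := h6
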